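/- arXiv:1401.0279 — 11 statements merged into one kernel-verified Lean document; each statement's English description precedes it below -/
import Mathlib

section
/- For real numbers x ≥ 2 and y ≥ 2, the inequality sqrt((x+y-1)/((x+1)y)) ≤ sqrt((x+y-2)/(xy)) holds, with equality if and only if y = 2. -/
/-! Raising the first degree from `x` to `x + 1` lowers the ABC radicand by exactly
`(y - 2) / (x (x + 1) y)`, which is nonnegative and vanishes only at `y = 2`. -/

open Real

section AbcRadicand

variable {x y : ℝ}

theorem abc_radicand_sub_abc_radicand_succ (hx : x ≠ 0) (hx' : x + 1 ≠ 0) (hy : y ≠ 0) :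
    (x + y - 2) / (x * y) - (x + y - 1) / ((x + 1) * y) = (y - 2) / (x * (x + 1) * y) := by
  field_simp
  ring

theorem abc_radicand_succ_nonneg (hx : 0 < x) (hy : 1 ≤ y) :
    0 ≤ (x + y - 1) / ((x + 1) * y) := by
  have hy0 : 0 < y := by linarith
  exact div_nonneg (by linarith) (by positivity)

theorem abc_radicand_succ_le (hx : 0 < x) (hy : 2 ≤ y) :
    (x + y - 1) / ((x + 1) * y) ≤ (x + y - 2) / (x * y) := by
  have hy0 : 0 < y := by linarith
  rw [← sub_nonneg, abc_radicand_sub_abc_radicand_succ hx.ne' (by linarith) hy0.ne']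
  exact div_nonneg (by linarith) (by positivity)

theorem abc_radicand_succ_eq_iff (hx : 0 < x) (hy : 0 < y) :
    (x + y - 1) / ((x + 1) * y) = (x + y - 2) / (x * y) ↔ y = 2 := by
  have hden : x * (x + 1) * y ≠ 0 := by positivity
  rw [eq_comm, ← sub_eq_zero, abc_radicand_sub_abc_radicand_succ hx.ne' (by linarith) hy.ne',
    div_eq_zero_iff, sub_eq_zero]
  simp only [hden, or_false]

end AbcRadicand

theorem stmt0 (x y : ℝ) (hx : 2 ≤ x) (hy : 2 ≤ y) :
    Real.sqrt ((x + y - 1) / ((x + 1) * y)) ≤ Real.sqrt ((x + y - 2) / (x * y)) ∧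
    (Real.sqrt ((x + y - 1) / ((x + 1) * y)) = Real.sqrt ((x + y - 2) / (x * y)) ↔ y = 2) := by
  have hx0 : 0 < x := by linarith
  have hle := abc_radicand_succ_le hx0 hy
  have hnonneg := abc_radicand_succ_nonneg hx0 (one_le_two.trans hy)
  refine ⟨Real.sqrt_le_sqrt hle, ?_⟩
  rw [Real.sqrt_inj hnonneg (hnonneg.trans hle)]
  exact abc_radicand_succ_eq_iff hx0 (two_pos.trans_le hy)
end

section
/- Let g(x,y) = -f(x,y) + f(x+1,y) where f(x,y) = sqrt((x+y-2)/(xy)). For real numbers x, y ≥ 2, the function g is monotonically increasing in x; that is, if 2 ≤ x1 ≤ x2 and y ≥ 2, then g(x1,y) ≤ g(x2,y). -/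
/-!
Writing `r x = √((x + y - 2) / (x y))`, one has `r (x+1)² - r x² = (2 - y) / (x (x+1) y)`, so
`g x = r (x+1) - r x = ((2 - y) / y) / (x (x+1) (r x + r (x+1)))`. The numerator is `≤ 0` for
`y ≥ 2`, and the denominator `(x+1) · x r x + x · (x+1) r (x+1)` increases with `x` because
`x r x = √(x (x + y - 2) / y)` does.
-/

open Real

noncomputable def sqrtRatio (x y : ℝ) : ℝ := √((x + y - 2) / (x * y))

section sqrtRatio

variable {x y : ℝ}

theorem sq_sqrtRatio (hx : 0 ≤ x) (hy : 0 ≤ y) (hxy : 2 ≤ x + y) :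
    sqrtRatio x y ^ 2 = (x + y - 2) / (x * y) :=
  sq_sqrt (div_nonneg (by linarith) (by positivity))

theorem sqrtRatio_pos (hx : 0 < x) (hy : 0 < y) (hxy : 2 < x + y) : 0 < sqrtRatio x y :=
  sqrt_pos.mpr (div_pos (by linarith) (by positivity))

theorem mul_sqrtRatio (hx : 0 < x) (hy : 0 < y) :
    x * sqrtRatio x y = √(x * (x + y - 2) / y) := by
  rw [sqrtRatio, ← sqrt_sq hx.le, ← sqrt_mul (sq_nonneg x), sqrt_sq hx.le]
  congr 1
  field_simp

theorem mul_sqrtRatio_le_mul_sqrtRatio {a b : ℝ} (ha : 0 < a) (hy : 0 < y) (hay : 2 ≤ a + y)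
    (hab : a ≤ b) : a * sqrtRatio a y ≤ b * sqrtRatio b y := by
  rw [mul_sqrtRatio ha hy, mul_sqrtRatio (ha.trans_le hab) hy]
  refine sqrt_le_sqrt (div_le_div_of_nonneg_right ?_ hy.le)
  nlinarith

theorem sqrtRatio_add_one_sub (hx : 0 < x) (hy : 0 < y) (hxy : 2 ≤ x + y) :
    sqrtRatio (x + 1) y - sqrtRatio x y =
      (2 - y) / y / (x * (x + 1) * (sqrtRatio x y + sqrtRatio (x + 1) y)) := by
  have hr := sqrtRatio_pos (x := x + 1) (by linarith) hy (by linarith)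
  have hr₀ : 0 ≤ sqrtRatio x y := sqrt_nonneg _
  have hsq : x * (x + 1) * (sqrtRatio (x + 1) y ^ 2 - sqrtRatio x y ^ 2) = (2 - y) / y := by
    rw [sq_sqrtRatio hx.le hy.le hxy, sq_sqrtRatio (by linarith) hy.le (by linarith)]
    field_simp
    ring
  rw [eq_div_iff (by positivity), ← hsq]
  ring

theorem mul_sqrtRatio_add_le {a b : ℝ} (ha : 0 < a) (hy : 0 < y) (hay : 2 ≤ a + y)
    (hab : a ≤ b) :
    a * (a + 1) * (sqrtRatio a y + sqrtRatio (a + 1) y) ≤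
      b * (b + 1) * (sqrtRatio b y + sqrtRatio (b + 1) y) := by
  have h₀ := mul_sqrtRatio_le_mul_sqrtRatio ha hy hay hab
  have h₁ := mul_sqrtRatio_le_mul_sqrtRatio (a := a + 1) (b := b + 1) (by linarith) hy
    (by linarith) (by linarith)
  have ha₀ : 0 ≤ a * sqrtRatio a y := mul_nonneg ha.le (sqrt_nonneg _)
  have ha₁ : 0 ≤ (a + 1) * sqrtRatio (a + 1) y := mul_nonneg (by linarith) (sqrt_nonneg _)
  calc a * (a + 1) * (sqrtRatio a y + sqrtRatio (a + 1) y)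
      = (a + 1) * (a * sqrtRatio a y) + a * ((a + 1) * sqrtRatio (a + 1) y) := by ring
    _ ≤ (b + 1) * (b * sqrtRatio b y) + b * ((b + 1) * sqrtRatio (b + 1) y) :=
        add_le_add (mul_le_mul (by linarith) h₀ ha₀ (by linarith))
          (mul_le_mul hab h₁ ha₁ (by linarith))
    _ = b * (b + 1) * (sqrtRatio b y + sqrtRatio (b + 1) y) := by ring

theorem sqrtRatio_add_one_sub_le (hy : 2 ≤ y) {a b : ℝ} (ha : 0 < a) (hab : a ≤ b) :
    sqrtRatio (a + 1) y - sqrtRatio a y ≤ sqrtRatio (b + 1) y - sqrtRatio b y := by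
  have hy₀ : 0 < y := by linarith
  rw [sqrtRatio_add_one_sub ha hy₀ (by linarith),
    sqrtRatio_add_one_sub (ha.trans_le hab) hy₀ (by linarith),
    show (2 - y) / y = -((y - 2) / y) by ring, neg_div, neg_div, neg_le_neg_iff]
  have hr := sqrtRatio_pos (x := a + 1) (by linarith) hy₀ (by linarith)
  have hr₀ : 0 ≤ sqrtRatio a y := sqrt_nonneg _
  exact div_le_div_of_nonneg_left (div_nonneg (by linarith) hy₀.le) (by positivity)
    (mul_sqrtRatio_add_le ha hy₀ (by linarith) hab)

end sqrtRatio

theorem stmt1 (f : ℝ → ℝ → ℝ) (hf : ∀ x y, f x y = Real.sqrt ((x + y - 2) / (x * y)))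
    (g : ℝ → ℝ → ℝ) (hg : ∀ x y, g x y = -f x y + f (x + 1) y)
    (x1 x2 y : ℝ) (hx1 : 2 ≤ x1) (hx12 : x1 ≤ x2) (hy : 2 ≤ y) :
    g x1 y ≤ g x2 y := by
  have hfg : ∀ x, g x y = sqrtRatio (x + 1) y - sqrtRatio x y := fun x => by
    rw [hg, hf, hf, sqrtRatio, sqrtRatio]
    ring
  rw [hfg, hfg]
  exact sqrtRatio_add_one_sub_le hy (by linarith) hx12
end

section
/- Let f(x,y) = sqrt((x+y-2)/(xy)). For real numbers x, y ≥ 2 (with y ≥ 3 so that y-1 ≥ 2), the quantity -f(x,y) + f(x,y-1) is non-negative, increases in x, and decreases in y. -/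
open Real

/-!
In the reciprocals `a = 1/x`, `b = 1/y` the radicand of `f` is the bilinear expression
`a + b - 2ab`, which is nondecreasing in `b` for `a ≤ 1/2`. The monotonicity claims compare sums
of two square roots, and `√A + √D ≤ √B + √C` follows by squaring from `A + D ≤ B + C` and
`AD ≤ BC`. In `x`, bilinearity makes both defects multiples of `(a₂ - a₁)(b₂ - b₁)`; in `y` the
radicand is affine in `b` with nonnegative coefficients, so it suffices that
`1/(t-1) + 1/s ≤ 1/(s-1) + 1/t` and `1/((t-1)s) ≤ 1/((s-1)t)` for `1 < s ≤ t`.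
-/

lemma sqrt_add_sqrt_le_sqrt_add_sqrt {a b c d : ℝ} (ha : 0 ≤ a) (hb : 0 ≤ b) (hc : 0 ≤ c)
    (hd : 0 ≤ d) (hsum : a + d ≤ b + c) (hprod : a * d ≤ b * c) : √a + √d ≤ √b + √c := by
  have hmul : √a * √d ≤ √b * √c := by
    rw [← sqrt_mul ha, ← sqrt_mul hb]
    exact sqrt_le_sqrt hprod
  refine (pow_le_pow_iff_left₀ (by positivity) (by positivity) two_ne_zero).1 ?_
  calc (√a + √d) ^ 2 = a + d + 2 * (√a * √d) := by rw [add_sq, sq_sqrt ha, sq_sqrt hd]; ring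
    _ ≤ b + c + 2 * (√b * √c) := by linarith
    _ = (√b + √c) ^ 2 := by rw [add_sq, sq_sqrt hb, sq_sqrt hc]; ring

def radicand (a b : ℝ) : ℝ := a + b - 2 * a * b

lemma div_mul_eq_radicand {x y : ℝ} (hx : x ≠ 0) (hy : y ≠ 0) :
    (x + y - 2) / (x * y) = radicand x⁻¹ y⁻¹ := by
  unfold radicand
  field_simp
  ring

lemma radicand_eq_add_mul (a b : ℝ) : radicand a b = a + (1 - 2 * a) * b := by
  unfold radicand
  ring

lemma radicand_nonneg {a b : ℝ} (ha : 0 ≤ a) (ha' : a ≤ 1 / 2) (hb : 0 ≤ b) :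
    0 ≤ radicand a b := by
  rw [radicand_eq_add_mul]
  nlinarith

lemma radicand_le_radicand {a b b' : ℝ} (ha : a ≤ 1 / 2) (hb : b ≤ b') :
    radicand a b ≤ radicand a b' := by
  rw [radicand_eq_add_mul, radicand_eq_add_mul]
  nlinarith

lemma sqrt_radicand_add_sqrt_radicand_le {a₁ a₂ b₁ b₂ : ℝ} (ha₁ : 0 ≤ a₁) (ha : a₁ ≤ a₂)
    (ha₂ : a₂ ≤ 1 / 2) (hb₁ : 0 ≤ b₁) (hb : b₁ ≤ b₂) :
    √(radicand a₂ b₂) + √(radicand a₁ b₁) ≤ √(radicand a₁ b₂) + √(radicand a₂ b₁) := by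
  have hdefect : 0 ≤ (a₂ - a₁) * (b₂ - b₁) := mul_nonneg (by linarith) (by linarith)
  apply sqrt_add_sqrt_le_sqrt_add_sqrt
  iterate 4 exact radicand_nonneg (by linarith) (by linarith) (by linarith)
  all_goals unfold radicand; nlinarith

lemma inv_sub_one_add_inv_le {s t : ℝ} (hs : 1 < s) (hst : s ≤ t) :
    (t - 1)⁻¹ + s⁻¹ ≤ (s - 1)⁻¹ + t⁻¹ := by
  have key : ((t - 1) * t)⁻¹ ≤ ((s - 1) * s)⁻¹ :=
    inv_anti₀ (mul_pos (by linarith) (by linarith)) (by nlinarith)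
  have ht : (t - 1)⁻¹ - t⁻¹ = ((t - 1) * t)⁻¹ := by
    field_simp [(by linarith : t - 1 ≠ 0), (by linarith : t ≠ 0)]; ring
  have hs' : (s - 1)⁻¹ - s⁻¹ = ((s - 1) * s)⁻¹ := by
    field_simp [(by linarith : s - 1 ≠ 0), (by linarith : s ≠ 0)]; ring
  linarith

lemma inv_sub_one_mul_inv_le {s t : ℝ} (hs : 1 < s) (hst : s ≤ t) :
    (t - 1)⁻¹ * s⁻¹ ≤ (s - 1)⁻¹ * t⁻¹ := by
  rw [← mul_inv, ← mul_inv]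
  exact inv_anti₀ (mul_pos (by linarith) (by linarith)) (by nlinarith)

lemma sqrt_radicand_inv_sub_one_add_le {a s t : ℝ} (ha : 0 ≤ a) (ha' : a ≤ 1 / 2) (hs : 1 < s)
    (hst : s ≤ t) :
    √(radicand a (t - 1)⁻¹) + √(radicand a s⁻¹) ≤
      √(radicand a (s - 1)⁻¹) + √(radicand a t⁻¹) := by
  have hsum := inv_sub_one_add_inv_le hs hst
  have hprod := inv_sub_one_mul_inv_le hs hst
  have hcoef : 0 ≤ a * (1 - 2 * a) := mul_nonneg ha (by linarith)
  apply sqrt_add_sqrt_le_sqrt_add_sqrt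
  iterate 4 exact radicand_nonneg ha ha' (inv_nonneg.2 (by linarith))
  all_goals simp only [radicand_eq_add_mul]; nlinarith [sq_nonneg (1 - 2 * a)]

theorem stmt3 (f : ℝ → ℝ → ℝ) (hf : ∀ x y, f x y = Real.sqrt ((x + y - 2) / (x * y))) :
    (∀ x y : ℝ, 2 ≤ x → 3 ≤ y → 0 ≤ -f x y + f x (y - 1)) ∧
    (∀ x1 x2 y : ℝ, 2 ≤ x1 → x1 ≤ x2 → 3 ≤ y →
      -f x1 y + f x1 (y - 1) ≤ -f x2 y + f x2 (y - 1)) ∧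
    (∀ x y1 y2 : ℝ, 2 ≤ x → 3 ≤ y1 → y1 ≤ y2 →
      -f x y2 + f x (y2 - 1) ≤ -f x y1 + f x (y1 - 1)) := by
  have hf' : ∀ x y : ℝ, 2 ≤ x → 2 ≤ y → f x y = √(radicand x⁻¹ y⁻¹) := fun x y hx hy => by
    rw [hf, div_mul_eq_radicand (by linarith : (0 : ℝ) < x).ne' (by linarith : (0 : ℝ) < y).ne']
  have hinv : ∀ x : ℝ, 2 ≤ x → 0 ≤ x⁻¹ ∧ x⁻¹ ≤ 1 / 2 := fun x hx =>
    ⟨inv_nonneg.2 (by linarith), by rw [one_div]; exact inv_anti₀ two_pos hx⟩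
  have hinv_le : ∀ y : ℝ, 3 ≤ y → y⁻¹ ≤ (y - 1)⁻¹ := fun y hy =>
    inv_anti₀ (by linarith) (by linarith)
  refine ⟨fun x y hx hy => ?_, fun x1 x2 y hx1 hx12 hy => ?_, fun x y1 y2 hx hy1 hy12 => ?_⟩
  · rw [hf' x y hx (by linarith), hf' x (y - 1) hx (by linarith)]
    linarith [sqrt_le_sqrt (radicand_le_radicand (hinv x hx).2 (hinv_le y hy))]
  · rw [hf' x1 y hx1 (by linarith), hf' x1 (y - 1) hx1 (by linarith),
      hf' x2 y (by linarith) (by linarith), hf' x2 (y - 1) (by linarith) (by linarith)]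
    linarith [sqrt_radicand_add_sqrt_radicand_le (hinv x2 (by linarith)).1
      (inv_anti₀ (by linarith) hx12) (hinv x1 hx1).2 (hinv y (by linarith)).1 (hinv_le y hy)]
  · rw [hf' x y1 hx (by linarith), hf' x (y1 - 1) hx (by linarith),
      hf' x y2 hx (by linarith), hf' x (y2 - 1) hx (by linarith)]
    linarith [sqrt_radicand_inv_sub_one_add_le (hinv x hx).1 (hinv x hx).2 (by linarith) hy12]
end

section
/- Let f(x,y) = sqrt((x+y-2)/(xy)). For real numbers x ≥ 2, y ≥ 2, Δx ≥ 0 and 0 ≤ Δy < y with y - Δy ≥ 2, the function g(x,y) = -f(x,y) + f(x+Δx, y-Δy) is increasing in x and decreasing in y. -/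
/-!
The `x`-derivative of `F(x, c) = √((x + c - 2) / (x c))` (`sqrtQuot`) is `-D(x, c)` with
`D(x, c) = (c - 2) / (2 √(x³ c (x + c - 2)))` (`sqrtQuotDecay`), and for `c ≥ 2` the rate `D`
decreases in `x` and increases in `c`. Hence `∂ₓ g(x, y) = D(x, y) - D(x + Δx, y - Δy) ≥ 0`.
Since `F` is symmetric, `-g(x, u + Δy)` is the same kind of expression in `u`, with `(x, Δx)` and
`(y, Δy)` exchanged, which gives the monotonicity in `y`.
-/

open Real Set

noncomputable def sqrtQuot (x y : ℝ) : ℝ := √((x + y - 2) / (x * y))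

noncomputable def sqrtQuotDecay (x c : ℝ) : ℝ := (c - 2) / (2 * √(x ^ 3 * c * (x + c - 2)))

lemma sqrtQuot_comm (x y : ℝ) : sqrtQuot x y = sqrtQuot y x := by
  rw [sqrtQuot, sqrtQuot, add_comm x y, mul_comm x y]

lemma hasDerivAt_sqrtQuot {x c : ℝ} (hx : 0 < x) (hc : 0 < c) (hxc : 0 < x + c - 2) :
    HasDerivAt (sqrtQuot · c) (-sqrtQuotDecay x c) x := by
  have hquot : HasDerivAt (fun t => (t + c - 2) / (t * c)) ((2 - c) / (x ^ 2 * c)) x := by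
    refine ((((hasDerivAt_id x).add_const c).sub_const 2).div ((hasDerivAt_id x).mul_const c)
      (by positivity)).congr_deriv ?_
    simp only [id]
    field_simp
    ring
  have hsqrt : √(x ^ 3 * c * (x + c - 2)) = x ^ 2 * c * √((x + c - 2) / (x * c)) := by
    rw [show x ^ 3 * c * (x + c - 2) = (x ^ 2 * c) ^ 2 * ((x + c - 2) / (x * c)) by
      field_simp, sqrt_mul' _ (by positivity), sqrt_sq (by positivity)]
  refine (hquot.sqrt (by positivity)).congr_deriv ?_
  rw [sqrtQuotDecay, hsqrt]
  field_simp
  ring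

lemma sqrtQuotDecay_anti_left {x x' c : ℝ} (hx : 0 < x) (hxx' : x ≤ x') (hc : 2 ≤ c) :
    sqrtQuotDecay x' c ≤ sqrtQuotDecay x c := by
  have : 0 ≤ c - 2 := by linarith
  have : 0 < x + c - 2 := by linarith
  have : 0 < x' ^ 3 * c := by have := hx.trans_le hxx'; positivity
  unfold sqrtQuotDecay
  gcongr

lemma sqrtQuotDecay_mono_right {x c c' : ℝ} (hx : 0 < x) (hc : 2 ≤ c) (hcc' : c ≤ c') :
    sqrtQuotDecay x c ≤ sqrtQuotDecay x c' := by
  set a := c - 2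
  set b := c' - 2
  have ha : 0 ≤ a := by linarith
  have hb : 0 ≤ b := by linarith
  have hab : 0 ≤ b - a := by linarith
  have hP : 0 < x ^ 3 * c * (x + c - 2) := by
    have : 0 < x + c - 2 := by linarith
    have : 0 < c := by linarith
    positivity
  have hP' : 0 < x ^ 3 * c' * (x + c' - 2) := by
    have : 0 < x + c' - 2 := by linarith
    have : 0 < c' := by linarith
    positivity
  have hsP := sqrt_pos.2 hP
  have hsP' := sqrt_pos.2 hP'
  unfold sqrtQuotDecay
  rw [div_le_div_iff₀ (by positivity) (by positivity), ← sq_le_sq₀ (by positivity) (by positivity),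
    mul_pow, mul_pow, mul_pow, mul_pow, sq_sqrt hP.le, sq_sqrt hP'.le]
  -- b²(a+2)(x+a) - a²(b+2)(x+b) = (b-a)(abx + 2x(a+b) + 2ab)
  have key : a ^ 2 * ((b + 2) * (x + b)) ≤ b ^ 2 * ((a + 2) * (x + a)) := by
    nlinarith [mul_nonneg hab (by positivity : 0 ≤ a * b * x + 2 * x * (a + b) + 2 * a * b)]
  have : 0 ≤ 4 * x ^ 3 := by positivity
  have := mul_le_mul_of_nonneg_left key this
  simp only [a, b] at this
  linarith

lemma monotoneOn_neg_sqrtQuot_add_sqrtQuot {c c' d : ℝ} (hd : 0 ≤ d) (hc' : 2 ≤ c')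
    (hc'c : c' ≤ c) : MonotoneOn (fun x => -sqrtQuot x c + sqrtQuot (x + d) c') (Ioi 0) := by
  have hderiv : ∀ x ∈ Ioi (0 : ℝ), HasDerivAt (fun x => -sqrtQuot x c + sqrtQuot (x + d) c')
      (sqrtQuotDecay x c - sqrtQuotDecay (x + d) c') x := by
    intro x (hx : 0 < x)
    have hxd : 0 < x + d := by linarith
    have h₁ := hasDerivAt_sqrtQuot hx (by linarith) (by linarith : 0 < x + c - 2)
    have h₂ := (hasDerivAt_sqrtQuot hxd (by linarith) (by linarith : 0 < x + d + c' - 2))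
      |>.comp_add_const x d
    exact (h₁.neg.add h₂).congr_deriv (by ring)
  refine monotoneOn_of_hasDerivWithinAt_nonneg (convex_Ioi 0)
    (fun x hx => (hderiv x hx).continuousAt.continuousWithinAt)
    (fun x hx => (hderiv x (interior_subset hx)).hasDerivWithinAt) (fun x hx => ?_)
  rw [interior_Ioi, mem_Ioi] at hx
  rw [sub_nonneg]
  calc sqrtQuotDecay (x + d) c' ≤ sqrtQuotDecay x c' := sqrtQuotDecay_anti_left hx (by linarith) hc'
    _ ≤ sqrtQuotDecay x c := sqrtQuotDecay_mono_right hx hc' hc'c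

theorem stmt4 (f : ℝ → ℝ → ℝ) (hf : ∀ x y, f x y = Real.sqrt ((x + y - 2) / (x * y)))
    (Δx Δy : ℝ) (hΔx : 0 ≤ Δx) (hΔy : 0 ≤ Δy)
    (g : ℝ → ℝ → ℝ) (hg : ∀ x y, g x y = -f x y + f (x + Δx) (y - Δy)) :
    (∀ x1 x2 y : ℝ, 2 ≤ x1 → x1 ≤ x2 → 2 ≤ y → Δy < y → 2 ≤ y - Δy →
      g x1 y ≤ g x2 y) ∧
    (∀ x y1 y2 : ℝ, 2 ≤ x → 2 ≤ y1 → y1 ≤ y2 → Δy < y1 → 2 ≤ y1 - Δy →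
      g x y2 ≤ g x y1) := by
  have hg' : ∀ x y, g x y = -sqrtQuot x y + sqrtQuot (x + Δx) (y - Δy) := by
    intro x y
    rw [hg, hf, hf, sqrtQuot, sqrtQuot]
  refine ⟨fun x1 x2 y hx1 hx12 _ _ hyΔ => ?_, fun x y1 y2 hx _ hy12 _ hy1Δ => ?_⟩
  · rw [hg', hg']
    exact monotoneOn_neg_sqrtQuot_add_sqrtQuot hΔx hyΔ (by linarith)
      (show 0 < x1 by linarith) (show 0 < x2 by linarith) hx12
  · have key := monotoneOn_neg_sqrtQuot_add_sqrtQuot hΔy (c := x + Δx) hx (by linarith)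
      (show 0 < y1 - Δy by linarith) (show 0 < y2 - Δy by linarith) (by linarith)
    simp only [sub_add_cancel] at key
    rw [hg', hg', sqrtQuot_comm x, sqrtQuot_comm x, sqrtQuot_comm (x + Δx), sqrtQuot_comm (x + Δx)]
    linarith
end

section
/- Let f(x,y) = sqrt((x+y-2)/(xy)). For real numbers x ≥ 3 and y ≥ 2, the quantity -f(x,y) + f(x-1,y) is non-negative, increases in y, and decreases in x. -/
/-!
Writing `F (x - 1) y - F x y` as a difference of square roots divided by their sum gives
`(1 - 2 / y) / (x (x - 1) (F (x - 1) y + F x y))`. The numerator is nonnegative and increases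
in `y`, while `F x y` decreases in `y`. In `x` the numerator is constant and the denominator
`(x - 1) · x F x y + x · (x - 1) F (x - 1) y` increases, because `x F x y = √(x (x + y - 2) / y)`
does.
-/

open Real

noncomputable def F (x y : ℝ) : ℝ := √((x + y - 2) / (x * y))

lemma F_pos {x y : ℝ} (hx : 0 < x) (hy : 0 < y) (hxy : 2 < x + y) : 0 < F x y :=
  sqrt_pos.2 (div_pos (by linarith) (mul_pos hx hy))

lemma denominator_pos {x y : ℝ} (hx : 1 < x) (hy : 2 ≤ y) :
    0 < x * (x - 1) * (F (x - 1) y + F x y) :=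
  mul_pos (mul_pos (by linarith) (by linarith))
    (add_pos (F_pos (by linarith) (by linarith) (by linarith))
      (F_pos (by linarith) (by linarith) (by linarith)))

lemma F_sub_one_sub_F {x y : ℝ} (hx : 1 < x) (hy : 2 ≤ y) :
    F (x - 1) y - F x y = (1 - 2 / y) / (x * (x - 1) * (F (x - 1) y + F x y)) := by
  have hsq₁ : F (x - 1) y ^ 2 = (x - 1 + y - 2) / ((x - 1) * y) :=
    sq_sqrt (div_nonneg (by linarith) (by nlinarith))
  have hsq₂ : F x y ^ 2 = (x + y - 2) / (x * y) :=
    sq_sqrt (div_nonneg (by linarith) (by nlinarith))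
  rw [eq_div_iff (denominator_pos hx hy).ne']
  have hx₀ : x ≠ 0 := by linarith
  have hx₁ : x - 1 ≠ 0 := by linarith
  have hy₀ : y ≠ 0 := by linarith
  calc (F (x - 1) y - F x y) * (x * (x - 1) * (F (x - 1) y + F x y))
      = x * (x - 1) * (F (x - 1) y ^ 2 - F x y ^ 2) := by ring
    _ = 1 - 2 / y := by rw [hsq₁, hsq₂]; field_simp; ring

lemma F_le_F_of_le_right {x y₁ y₂ : ℝ} (hx : 2 ≤ x) (hy₁ : 0 < y₁) (hy : y₁ ≤ y₂) :
    F x y₂ ≤ F x y₁ := by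
  refine sqrt_le_sqrt ?_
  rw [div_le_div_iff₀ (by nlinarith) (by nlinarith)]
  nlinarith [mul_nonneg (mul_nonneg (by linarith : (0 : ℝ) ≤ x) (by linarith : (0 : ℝ) ≤ x - 2))
    (by linarith : (0 : ℝ) ≤ y₂ - y₁)]

lemma mul_F_eq_sqrt {x y : ℝ} (hx : 0 < x) (hy : 0 < y) :
    x * F x y = √(x * (x + y - 2) / y) := by
  nth_rw 1 [← sqrt_sq hx.le]
  rw [F, ← sqrt_mul (sq_nonneg x)]
  congr 1
  field_simp

lemma mul_F_le_mul_F {a b y : ℝ} (ha : 0 < a) (hab : a ≤ b) (hy : 2 ≤ y) :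
    a * F a y ≤ b * F b y := by
  rw [mul_F_eq_sqrt ha (by linarith), mul_F_eq_sqrt (by linarith) (by linarith)]
  exact sqrt_le_sqrt (div_le_div_of_nonneg_right
    (mul_le_mul hab (by linarith) (by linarith) (by linarith)) (by linarith))

lemma denominator_le_denominator {x₁ x₂ y : ℝ} (hx₁ : 1 < x₁) (hx : x₁ ≤ x₂) (hy : 2 ≤ y) :
    x₁ * (x₁ - 1) * (F (x₁ - 1) y + F x₁ y) ≤ x₂ * (x₂ - 1) * (F (x₂ - 1) y + F x₂ y) := by
  have hF₁ : 0 ≤ x₁ * F x₁ y := mul_nonneg (by linarith) (sqrt_nonneg _)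
  have hF₁' : 0 ≤ (x₁ - 1) * F (x₁ - 1) y := mul_nonneg (by linarith) (sqrt_nonneg _)
  calc x₁ * (x₁ - 1) * (F (x₁ - 1) y + F x₁ y)
      = (x₁ - 1) * (x₁ * F x₁ y) + x₁ * ((x₁ - 1) * F (x₁ - 1) y) := by ring
    _ ≤ (x₂ - 1) * (x₂ * F x₂ y) + x₂ * ((x₂ - 1) * F (x₂ - 1) y) :=
      add_le_add (mul_le_mul (by linarith) (mul_F_le_mul_F (by linarith) hx hy) hF₁ (by linarith))
        (mul_le_mul hx (mul_F_le_mul_F (by linarith) (by linarith) hy) hF₁' (by linarith))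
    _ = x₂ * (x₂ - 1) * (F (x₂ - 1) y + F x₂ y) := by ring

theorem stmt5 (f : ℝ → ℝ → ℝ) (hf : ∀ x y, f x y = Real.sqrt ((x + y - 2) / (x * y))) :
    (∀ x y : ℝ, 3 ≤ x → 2 ≤ y → 0 ≤ -f x y + f (x - 1) y) ∧
    (∀ x y1 y2 : ℝ, 3 ≤ x → 2 ≤ y1 → y1 ≤ y2 →
      -f x y1 + f (x - 1) y1 ≤ -f x y2 + f (x - 1) y2) ∧
    (∀ x1 x2 y : ℝ, 3 ≤ x1 → x1 ≤ x2 → 2 ≤ y →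
      -f x2 y + f (x2 - 1) y ≤ -f x1 y + f (x1 - 1) y) := by
  obtain rfl : f = F := funext₂ hf
  simp only [neg_add_eq_sub]
  have numerator_nonneg {y : ℝ} (hy : 2 ≤ y) : 0 ≤ 1 - 2 / y := by
    rw [sub_nonneg, div_le_one₀ (by linarith)]
    exact hy
  refine ⟨fun x y hx hy => ?_, fun x y₁ y₂ hx hy₁ hy => ?_, fun x₁ x₂ y hx₁ hx hy => ?_⟩
  · rw [F_sub_one_sub_F (by linarith) hy]
    exact div_nonneg (numerator_nonneg hy) (denominator_pos (by linarith) hy).le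
  · have hy₂ : 2 ≤ y₂ := hy₁.trans hy
    rw [F_sub_one_sub_F (by linarith) hy₁, F_sub_one_sub_F (by linarith) hy₂]
    refine div_le_div₀ (numerator_nonneg hy₂)
      (sub_le_sub_left (div_le_div_of_nonneg_left zero_le_two (by linarith) hy) 1)
      (denominator_pos (by linarith) hy₂)
      (mul_le_mul_of_nonneg_left (add_le_add ?_ ?_) (by nlinarith)) <;>
    exact F_le_F_of_le_right (by linarith) (by linarith) hy
  · rw [F_sub_one_sub_F (by linarith) hy, F_sub_one_sub_F (by linarith) hy]
    exact div_le_div_of_nonneg_left (numerator_nonneg hy) (denominator_pos (by linarith) hy)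
      (denominator_le_denominator (by linarith) hx hy)
end

section
/- Let f(x,y) = sqrt((x+y-2)/(xy)). For every real u ≥ 3, the strict inequality -f(u,5) + f(u,6) > -f(u,4) + f(u,5) holds; equivalently, 2f(u,5) < f(u,4) + f(u,6), i.e., f(u,·) is strictly concave along the points 4, 5, 6. -/
open Real

/-!
Write `A, B, C` for the radicands of `f u 4, f u 5, f u 6`. Squaring `2√B < √A + √C` twice
reduces it to `(4B - A - C)² < 4AC`, which after clearing denominators is
`(u - 2)(71u + 338) > 0`.
-/

lemma two_mul_sqrt_lt_sqrt_add_sqrt {A B C : ℝ} (hA : 0 ≤ A) (hB : 0 ≤ B) (hC : 0 ≤ C)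
    (h : (4 * B - A - C) ^ 2 < 4 * (A * C)) : 2 * √B < √A + √C := by
  have hcross : 4 * B - A - C < 2 * (√A * √C) :=
    lt_of_pow_lt_pow_left₀ 2 (by positivity) <| by
      rwa [mul_pow, mul_pow, sq_sqrt hA, sq_sqrt hC, show (2 : ℝ) ^ 2 = 4 by norm_num]
  refine lt_of_pow_lt_pow_left₀ 2 (by positivity) ?_
  rw [mul_pow, add_sq, sq_sqrt hA, sq_sqrt hB, sq_sqrt hC]
  linarith

lemma abc_radicand_gap_sq_lt {u : ℝ} (hu : 2 < u) :
    (4 * ((u + 5 - 2) / (u * 5)) - (u + 4 - 2) / (u * 4) - (u + 6 - 2) / (u * 6)) ^ 2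
      < 4 * ((u + 4 - 2) / (u * 4) * ((u + 6 - 2) / (u * 6))) := by
  have hu0 : u ≠ 0 := by positivity
  rw [← sub_neg, show
    (4 * ((u + 5 - 2) / (u * 5)) - (u + 4 - 2) / (u * 4) - (u + 6 - 2) / (u * 6)) ^ 2
      - 4 * ((u + 4 - 2) / (u * 4) * ((u + 6 - 2) / (u * 6)))
      = -((u - 2) * (71 * u + 338)) / (3600 * u ^ 2) by field_simp; ring]
  exact div_neg_of_neg_of_pos (by nlinarith) (by positivity)

theorem stmt9 (f : ℝ → ℝ → ℝ) (hf : ∀ x y, f x y = Real.sqrt ((x + y - 2) / (x * y)))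
    (u : ℝ) (hu : 3 ≤ u) :
    -f u 4 + f u 5 < -f u 5 + f u 6 := by
  have radicand_nonneg (y : ℝ) (hy : 0 < y) : 0 ≤ (u + y - 2) / (u * y) :=
    div_nonneg (by linarith) (by nlinarith)
  have hmid := two_mul_sqrt_lt_sqrt_add_sqrt (radicand_nonneg 4 four_pos) (radicand_nonneg 5 (by norm_num))
    (radicand_nonneg 6 (by norm_num)) (abc_radicand_gap_sq_lt (by linarith))
  rw [hf, hf, hf]
  linarith
end

section
/- Let f(x,y) = sqrt((x+y-2)/(xy)) and define g(u) = 2(-f(u,6) + f(u,5)) + 2(-f(u,5) + f(u,4)) + f(u,4) - sqrt(1/2) for real u ≥ 6. Then g(u) < -0.02 for all u ≥ 6; in particular g(u) ≤ max(g(6), lim_{u→∞} g(u)) = lim_{u→∞} g(u) ≈ -0.0236034 < 0 for integer u ≥ 6. -/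
open Real

/-- With `a = f u 4` and `b = f u 6` the bound is a polynomial inequality: squaring
`2 b ≤ 3 a - s + 0.02` gives a convex quadratic in `a` that is negative at both ends of
`[1/2, 1/√3]`. -/
lemma three_mul_sub_two_mul_sub_lt {a b s : ℝ} (ha : 0 ≤ a) (hb : 0 ≤ b)
    (hab : 6 * b ^ 2 = 8 * a ^ 2 - 1) (ha_ge : 1 / 4 ≤ a ^ 2) (ha_le : a ^ 2 ≤ 1 / 3)
    (hs : 0.7071 ≤ s) : 3 * a - 2 * b - s < -0.02 := by
  have ha₁ : 1 / 2 ≤ a := by nlinarith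
  have ha₂ : a ≤ 0.5774 := by nlinarith
  by_contra! h
  have hb_le : 2 * b ≤ 3 * a - 0.6871 := by linarith
  nlinarith [mul_le_mul hb_le hb_le (by positivity) (by linarith),
    mul_nonneg (sub_nonneg.2 ha₁) (sub_nonneg.2 ha₂)]

theorem stmt10 (f : ℝ → ℝ → ℝ) (hf : ∀ x y, f x y = Real.sqrt ((x + y - 2) / (x * y)))
    (g : ℝ → ℝ)
    (hg : ∀ u, g u = 2 * (-f u 6 + f u 5) + 2 * (-f u 5 + f u 4) + f u 4 - Real.sqrt (1 / 2))
    (u : ℝ) (hu : 6 ≤ u) :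
    g u < -0.02 := by
  have hu₀ : 0 < u := by linarith
  have hg_u : g u = 3 * f u 4 - 2 * f u 6 - √(1 / 2) := by rw [hg]; ring
  have ha_sq : f u 4 ^ 2 = (u + 2) / (4 * u) := by
    rw [hf, sq_sqrt (div_nonneg (by linarith) (by positivity))]; ring
  have hb_sq : f u 6 ^ 2 = (u + 4) / (6 * u) := by
    rw [hf, sq_sqrt (div_nonneg (by linarith) (by positivity))]; ring
  rw [hg_u]
  apply three_mul_sub_two_mul_sub_lt (by rw [hf]; positivity) (by rw [hf]; positivity)
  · rw [ha_sq, hb_sq]; field_simp; ring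
  · rw [ha_sq, le_div_iff₀ (by positivity)]; linarith
  · rw [ha_sq, div_le_iff₀ (by positivity)]; linarith
  · exact (le_sqrt (by norm_num) (by norm_num)).2 (by norm_num)
end

section
/- Let f(x,y) = sqrt((x+y-2)/(xy)) and define g(u) = -f(u,6) + f(u,5) + 3(-f(u,5) + f(u,4)) + f(u,4) - sqrt(1/2) for real u ≥ 6. Then g(u) < 0 for all u ≥ 6; more precisely max(g(6), lim_{u→∞} g(u)) ≈ -0.00978226 < 0. -/
open Real

/-! With `t = 1/u ∈ (0, 1/6]` one has `f u k = √(1 + (k - 2) t) · √(1/k)`, so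
`g u = 2√(1 + 2t) - 2√(1 + 3t)√(1/5) - √(1 + 4t)√(1/6) - √(1/2)`.
Bounding `√(1 + x)` above by its Taylor polynomial of degree 3 and below by that of degree 2,
and the constants `√(1/5), √(1/6), √(1/2)` below by three-digit decimals, leaves a cubic in `t`
that is convex on `[0, 1/6]` and negative at both ends. -/

namespace Real

lemma quadratic_le_sqrt_one_add {x : ℝ} (hx : 0 ≤ x) :
    1 + x / 2 - x ^ 2 / 8 ≤ √(1 + x) := by
  rcases le_or_gt (1 + x / 2 - x ^ 2 / 8) 0 with hneg | hpos
  · exact hneg.trans (sqrt_nonneg _)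
  · -- the square of the left side is `1 + x - x³/8 + x⁴/64`, and `hpos` forces `x < 8`
    rw [le_sqrt' hpos]
    nlinarith [pow_nonneg hx 3]

lemma sqrt_one_add_le_cubic {x : ℝ} (hx : 0 ≤ x) :
    √(1 + x) ≤ 1 + x / 2 - x ^ 2 / 8 + x ^ 3 / 16 := by
  rw [sqrt_le_iff]
  constructor
  · nlinarith [sq_nonneg (x - 2)]
  · -- the difference is `x⁴ ((x - 2)² + 16) / 256`
    nlinarith [mul_nonneg (pow_nonneg hx 4) (sq_nonneg (x - 2)), pow_nonneg hx 4]

lemma sqrt_add_sub_two_div_mul {u k : ℝ} (hu : u ≠ 0) (hk : 0 ≤ k) :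
    √((u + k - 2) / (u * k)) = √(1 + (k - 2) * u⁻¹) * √k⁻¹ := by
  rw [← sqrt_mul' _ (inv_nonneg.mpr hk)]
  congr 1
  field_simp
  ring

end Real

lemma cubic_bound_neg {t : ℝ} (ht0 : 0 ≤ t) (ht1 : t ≤ 1 / 6) :
    2 * (1 + t - t ^ 2 / 2 + t ^ 3 / 2) - 2 * (447 / 1000) * (1 + 3 / 2 * t - 9 / 8 * t ^ 2)
      - 408 / 1000 * (1 + 2 * t - 2 * t ^ 2) - 707 / 1000 < 0 := by
  -- convexity: the cubic minus its chord over `[0, 1/6]` is `t (t - 1/6) (t + r)` with `r ≈ 0.99`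
  nlinarith [mul_nonneg (mul_nonneg ht0 (sub_nonneg.mpr ht1)) (by linarith : (0 : ℝ) ≤ t + 1)]

lemma sqrt_combination_neg {t : ℝ} (ht0 : 0 ≤ t) (ht1 : t ≤ 1 / 6) :
    2 * √(1 + 2 * t) - 2 * (√(1 + 3 * t) * √5⁻¹) - √(1 + 4 * t) * √6⁻¹ - √(1 / 2) < 0 := by
  have hA := sqrt_one_add_le_cubic (by positivity : 0 ≤ 2 * t)
  have hB := quadratic_le_sqrt_one_add (by positivity : 0 ≤ 3 * t)
  have hC := quadratic_le_sqrt_one_add (by positivity : 0 ≤ 4 * t)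
  have h5 : (447 / 1000 : ℝ) ≤ √5⁻¹ := by rw [le_sqrt' (by norm_num)]; norm_num
  have h6 : (408 / 1000 : ℝ) ≤ √6⁻¹ := by rw [le_sqrt' (by norm_num)]; norm_num
  have h2 : (707 / 1000 : ℝ) ≤ √(1 / 2) := by rw [le_sqrt' (by norm_num)]; norm_num
  have hBs := mul_le_mul hB h5 (by norm_num) (sqrt_nonneg _)
  have hCs := mul_le_mul hC h6 (by norm_num) (sqrt_nonneg _)
  linarith [cubic_bound_neg ht0 ht1]

theorem stmt11 (f : ℝ → ℝ → ℝ) (hf : ∀ x y, f x y = Real.sqrt ((x + y - 2) / (x * y)))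
    (g : ℝ → ℝ)
    (hg : ∀ u, g u = -f u 6 + f u 5 + 3 * (-f u 5 + f u 4) + f u 4 - Real.sqrt (1 / 2))
    (u : ℝ) (hu : 6 ≤ u) :
    g u < 0 := by
  have hu0 : u ≠ 0 := by positivity
  have ht1 : u⁻¹ ≤ 1 / 6 := by rw [one_div]; exact inv_anti₀ (by norm_num) hu
  have hsqrt4 : √(4 : ℝ)⁻¹ = 1 / 2 := by
    rw [show (4 : ℝ)⁻¹ = (1 / 2) ^ 2 by norm_num, sqrt_sq (by norm_num)]
  have hgt : g u = 2 * √(1 + 2 * u⁻¹) - 2 * (√(1 + 3 * u⁻¹) * √5⁻¹)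
      - √(1 + 4 * u⁻¹) * √6⁻¹ - √(1 / 2) := by
    simp only [hg, hf, sqrt_add_sub_two_div_mul hu0 (by norm_num : (0 : ℝ) ≤ 4),
      sqrt_add_sub_two_div_mul hu0 (by norm_num : (0 : ℝ) ≤ 5),
      sqrt_add_sub_two_div_mul hu0 (by norm_num : (0 : ℝ) ≤ 6), hsqrt4]
    norm_num
    ring
  rw [hgt]
  exact sqrt_combination_neg (by positivity) ht1
end

section
/- For real numbers x ≥ 2 and y ≥ 2, the inequality (x+1)(x-2)^2 (x+y-1) < x(x-1)^2 (x+y-2) holds whenever x > 2; for x = 2 the left side is 0 and the right side is positive when y > 2. -/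
theorem mul_sq_mul_sub_mul_sq_mul_eq (x y : ℝ) :
    x * (x - 1) ^ 2 * (x + y - 2) - (x + 1) * (x - 2) ^ 2 * (x + y - 1) =
      (y - 2) * (x ^ 2 + x - 4) + 4 * (x ^ 2 - x - 1) := by
  ring

theorem mul_sq_mul_lt_mul_sq_mul {x y : ℝ} (hx : 2 ≤ x) (hy : 2 ≤ y) :
    (x + 1) * (x - 2) ^ 2 * (x + y - 1) < x * (x - 1) ^ 2 * (x + y - 2) := by
  have hquad_nonneg : 0 ≤ x ^ 2 + x - 4 := by nlinarith
  have hquad_pos : 0 < x ^ 2 - x - 1 := by nlinarith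
  have hprod_nonneg := mul_nonneg (sub_nonneg.2 hy) hquad_nonneg
  linarith [mul_sq_mul_sub_mul_sq_mul_eq x y]

theorem stmt14 (x y : ℝ) (hx : 2 ≤ x) (hy : 2 ≤ y) :
    (2 < x → (x + 1) * (x - 2) ^ 2 * (x + y - 1) < x * (x - 1) ^ 2 * (x + y - 2)) ∧
    (x = 2 → (x + 1) * (x - 2) ^ 2 * (x + y - 1) = 0 ∧
      (2 < y → 0 < x * (x - 1) ^ 2 * (x + y - 2))) := by
  refine ⟨fun _ => mul_sq_mul_lt_mul_sq_mul hx hy, ?_⟩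
  rintro rfl
  exact ⟨by ring, fun hy2 => by nlinarith⟩
end

section
/- Let f(x,y) = sqrt((x+y-2)/(xy)). For every real u ≥ 5, the function u ↦ -f(u,u) + f(u+1,u) is increasing in u and satisfies -f(u,u) + f(u+1,u) < 0; its supremum (limit as u → ∞) equals 0. -/
open Real Filter

/-! Rationalising, `f(u+1,u) - f(u,u) = (f(u+1,u)² - f(u,u)²) / (f(u+1,u) + f(u,u))`, and the
numerator equals `(2 - u) / (u²(u+1))`. So with `s = u²(u+1)/(u-2)` the quantity is `-1/D(u)`, where
`D(u) = s f(u+1,u) + s f(u,u)`. Both summands of `D` are square roots of products of nonnegative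
functions increasing on `[5, ∞)`, and `D(u) ≥ u`; monotonicity, negativity and the limit follow. -/

open Set

noncomputable def abcWeight (x y : ℝ) : ℝ := √((x + y - 2) / (x * y))

lemma monotoneOn_sq_div_sub_two : MonotoneOn (fun u : ℝ => u ^ 2 / (u - 2)) (Ici 4) := by
  intro a ha b hb hab
  simp only [mem_Ici] at ha hb
  rw [div_le_div_iff₀ (by linarith) (by linarith)]
  nlinarith [mul_nonneg (sub_nonneg.2 hab) (mul_nonneg (sub_nonneg.2 ha) (sub_nonneg.2 hb)),
    mul_nonneg (sub_nonneg.2 hab) (sub_nonneg.2 ha)]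

lemma monotoneOn_succ_mul_div_sub_two {c : ℝ} (hc : -2 ≤ c) :
    MonotoneOn (fun u : ℝ => (u + 1) * (2 * u - c) / (u - 2)) (Ici 5) := by
  intro a ha b hb hab
  simp only [mem_Ici] at ha hb
  rw [div_le_div_iff₀ (by linarith) (by linarith)]
  -- the difference of the two sides is `(b - a) (2ab - 4a - 4b - 4 + 3c)`
  nlinarith [mul_nonneg (sub_nonneg.2 hab) (mul_nonneg (sub_nonneg.2 ha) (sub_nonneg.2 hb)),
    mul_nonneg (sub_nonneg.2 hab) (sub_nonneg.2 ha), mul_nonneg (sub_nonneg.2 hab) (sub_nonneg.2 hb),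
    mul_nonneg (sub_nonneg.2 hab) (by linarith : (0:ℝ) ≤ c + 2)]

noncomputable def abcGainDenom (u : ℝ) : ℝ :=
  √(u ^ 2 / (u - 2) * u * ((u + 1) * (2 * u - 1) / (u - 2))) +
    √(u ^ 2 / (u - 2) * (u + 1) * ((u + 1) * (2 * u - 2) / (u - 2)))

lemma abcWeight_succ_sub_eq {u : ℝ} (hu : 2 < u) :
    -abcWeight u u + abcWeight (u + 1) u = -(abcGainDenom u)⁻¹ := by
  have hu2 : 0 < u - 2 := by linarith
  set s := u ^ 2 * (u + 1) / (u - 2) with hs_def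
  have hs : 0 < s := by positivity
  set A := abcWeight (u + 1) u
  set B := abcWeight u u
  have hA : √(u ^ 2 / (u - 2) * u * ((u + 1) * (2 * u - 1) / (u - 2))) = s * A := by
    rw [show u ^ 2 / (u - 2) * u * ((u + 1) * (2 * u - 1) / (u - 2))
        = s ^ 2 * ((u + 1 + u - 2) / ((u + 1) * u)) by rw [hs_def]; field_simp; ring,
      sqrt_mul (sq_nonneg s), sqrt_sq hs.le]
    rfl
  have hB : √(u ^ 2 / (u - 2) * (u + 1) * ((u + 1) * (2 * u - 2) / (u - 2))) = s * B := by
    rw [show u ^ 2 / (u - 2) * (u + 1) * ((u + 1) * (2 * u - 2) / (u - 2))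
        = s ^ 2 * ((u + u - 2) / (u * u)) by rw [hs_def]; field_simp; ring,
      sqrt_mul (sq_nonneg s), sqrt_sq hs.le]
    rfl
  have key : s * (B ^ 2 - A ^ 2) = 1 := by
    simp only [A, B, abcWeight]
    rw [sq_sqrt (div_nonneg (by linarith) (by positivity)),
      sq_sqrt (div_nonneg (by linarith) (by positivity)), hs_def]
    field_simp
    ring
  have hA₀ : 0 ≤ A := sqrt_nonneg _
  have hB₀ : 0 < B := sqrt_pos.2 (div_pos (by linarith) (by positivity))
  rw [abcGainDenom, hA, hB, ← mul_add]
  field_simp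
  linear_combination -key

lemma monotoneOn_sqrt_radicand {g : ℝ → ℝ} (hg : MonotoneOn g (Ici 5)) (hg₀ : ∀ u ∈ Ici 5, 0 ≤ g u)
    {c : ℝ} (hc : -2 ≤ c) (hc' : c ≤ 10) :
    MonotoneOn (fun u => √(u ^ 2 / (u - 2) * g u * ((u + 1) * (2 * u - c) / (u - 2)))) (Ici 5) := by
  have h₁ : ∀ u ∈ Ici (5 : ℝ), 0 ≤ u ^ 2 / (u - 2) := fun u hu =>
    div_nonneg (sq_nonneg u) (by simp only [mem_Ici] at hu; linarith)
  have h₂ : ∀ u ∈ Ici (5 : ℝ), 0 ≤ (u + 1) * (2 * u - c) / (u - 2) := fun u hu => by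
    simp only [mem_Ici] at hu
    exact div_nonneg (mul_nonneg (by linarith) (by linarith)) (by linarith)
  exact sqrt_monotone.comp_monotoneOn (((monotoneOn_sq_div_sub_two.mono
    (Ici_subset_Ici.2 (by norm_num))).mul hg h₁ hg₀).mul
      (monotoneOn_succ_mul_div_sub_two hc) (fun u hu => mul_nonneg (h₁ u hu) (hg₀ u hu)) h₂)

lemma monotoneOn_abcGainDenom : MonotoneOn abcGainDenom (Ici 5) :=
  (monotoneOn_sqrt_radicand monotoneOn_id (fun u hu => le_trans (by norm_num) hu)
    (by norm_num) (by norm_num)).add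
  (monotoneOn_sqrt_radicand ((monotone_id.add_const 1).monotoneOn _)
    (fun u hu => by simp only [mem_Ici, id] at hu ⊢; linarith) (by norm_num) (by norm_num))

lemma le_abcGainDenom {u : ℝ} (hu : 2 < u) : u ≤ abcGainDenom u := by
  have hu2 : 0 < u - 2 := by linarith
  have h : u ≤ √(u ^ 2 / (u - 2) * u * ((u + 1) * (2 * u - 1) / (u - 2))) := by
    rw [le_sqrt' (by linarith), show u ^ 2 / (u - 2) * u * ((u + 1) * (2 * u - 1) / (u - 2))
      = u ^ 2 * (u * (u + 1) * (2 * u - 1) / (u - 2) ^ 2) by field_simp]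
    refine le_mul_of_one_le_right (sq_nonneg u) ((one_le_div (by positivity)).2 ?_)
    nlinarith
  exact h.trans (le_add_of_nonneg_right (sqrt_nonneg _))

theorem stmt15 (f : ℝ → ℝ → ℝ) (hf : ∀ x y, f x y = Real.sqrt ((x + y - 2) / (x * y))) :
    (∀ u1 u2 : ℝ, 5 ≤ u1 → u1 ≤ u2 → -f u1 u1 + f (u1 + 1) u1 ≤ -f u2 u2 + f (u2 + 1) u2) ∧
    (∀ u : ℝ, 5 ≤ u → -f u u + f (u + 1) u < 0) ∧
    Filter.Tendsto (fun u : ℝ => -f u u + f (u + 1) u) Filter.atTop (nhds 0) := by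
  obtain rfl : f = abcWeight := funext₂ hf
  have hgain : ∀ u, 5 ≤ u → -abcWeight u u + abcWeight (u + 1) u = -(abcGainDenom u)⁻¹ :=
    fun u hu => abcWeight_succ_sub_eq (by linarith)
  have hpos : ∀ u, 5 ≤ u → 0 < abcGainDenom u := fun u hu =>
    (by linarith : (0 : ℝ) < u).trans_le (le_abcGainDenom (by linarith))
  refine ⟨fun a b ha hab => ?_, fun u hu => ?_, ?_⟩
  · rw [hgain a ha, hgain b (ha.trans hab), neg_le_neg_iff]
    exact inv_anti₀ (hpos a ha) (monotoneOn_abcGainDenom ha (ha.trans hab) hab)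
  · rw [hgain u hu, neg_lt_zero, inv_pos]
    exact hpos u hu
  · have hlower : Tendsto (fun u : ℝ => -u⁻¹) atTop (nhds 0) := by
      simpa using (tendsto_inv_atTop_zero (𝕜 := ℝ)).neg
    refine tendsto_of_tendsto_of_tendsto_of_le_of_le' hlower tendsto_const_nhds ?_ ?_
    · filter_upwards [eventually_ge_atTop 5] with u hu
      rw [hgain u hu, neg_le_neg_iff]
      exact inv_anti₀ (by linarith) (le_abcGainDenom (by linarith))
    · filter_upwards [eventually_ge_atTop 5] with u hu
      rw [hgain u hu, neg_nonpos]
      exact (inv_pos.2 (hpos u hu)).le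
end

section
/- Define g(u) = -sqrt((u+4)/(6u)) + sqrt((u+2)/(4u)) - sqrt(1/2) + sqrt((u+1)/(3u)) for real u ≥ 6 (this is -f(u,6)+f(u,4)-f(u,2)+f(u,3) with f(x,y)=sqrt((x+y-2)/(xy))). Then g(u) ≤ max(g(6), lim_{u→∞} g(u)) < -0.033 for all u ≥ 6; in particular g is negative on [6,∞). -/
/-!
Write `A u = √((u + 4) / (6u))`, `B u = √((u + 2) / (4u))`, `C u = √((u + 1) / (3u))`. Since
`√x - √y = (x - y) / (√x + √y)`, the difference `g 6 - g u` factors as `(u - 6) / (36 u)` times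
`3 / (B 6 + B u) + 2 / (C 6 + C u) - 4 / (A 6 + A u)`. All three roots decrease in `u`, so this
bracket is bounded below by a positive constant on `[6, 24]` and on `[24, ∞)` separately. Hence
`g u ≤ g 6` for `u ≥ 6`, and the numerical bounds are plain square-root estimates.
-/

open Real Filter Topology

/-- `abcTerm (k - 2) k u` is the ABC edge weight `√((u + k - 2) / (u k))` of an edge joining
vertices of degrees `u` and `k`. -/
noncomputable def abcTerm (c k u : ℝ) : ℝ := √((u + c) / (k * u))

lemma Real.sqrt_sub_sqrt {x y : ℝ} (hx : 0 ≤ x) (hy : 0 ≤ y) :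
    √x - √y = (x - y) / (√x + √y) := by
  rcases (add_nonneg (sqrt_nonneg x) (sqrt_nonneg y)).eq_or_lt with h | h
  · have hx0 : √x = 0 := by linarith [sqrt_nonneg x, sqrt_nonneg y]
    have hy0 : √y = 0 := by linarith [sqrt_nonneg x, sqrt_nonneg y]
    rw [← h, div_zero, hx0, hy0, sub_zero]
  · rw [eq_div_iff h.ne']
    linear_combination sq_sqrt hx - sq_sqrt hy

namespace abcTerm

lemma add_div_mul_eq (c k : ℝ) {u : ℝ} (hu : u ≠ 0) :
    (u + c) / (k * u) = (1 + c / u) / k := by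
  rw [mul_comm, ← div_div, add_div, div_self hu]

lemma tendsto_atTop (c k : ℝ) : Tendsto (abcTerm c k) atTop (𝓝 √(1 / k)) := by
  have hlim : Tendsto (fun u : ℝ => (1 + c / u) / k) atTop (𝓝 (1 / k)) := by
    simpa using ((tendsto_const_nhds.div_atTop tendsto_id).const_add 1).div_const k
  refine ((continuous_sqrt.tendsto _).comp hlim).congr' ?_
  filter_upwards [eventually_ne_atTop 0] with u hu
  simp [abcTerm, add_div_mul_eq c k hu]

lemma antitoneOn {c k : ℝ} (hc : 0 ≤ c) (hk : 0 ≤ k) :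
    AntitoneOn (abcTerm c k) (Set.Ioi 0) := by
  intro u hu w hw huw
  simp only [abcTerm, add_div_mul_eq c k hu.ne', add_div_mul_eq c k (Set.mem_Ioi.mp hw).ne']
  gcongr

lemma sqrt_inv_le {c k u : ℝ} (hc : 0 ≤ c) (hk : 0 ≤ k) (hu : 0 < u) :
    √(1 / k) ≤ abcTerm c k u := by
  rw [abcTerm, add_div_mul_eq c k hu.ne']
  gcongr
  simpa using div_nonneg hc hu.le

lemma pos {c k u : ℝ} (hc : 0 ≤ c) (hk : 0 < k) (hu : 0 < u) : 0 < abcTerm c k u :=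
  (sqrt_pos.mpr (by simpa using hk)).trans_le (sqrt_inv_le hc hk.le hu)

lemma sub_eq {c k u v : ℝ} (hc : 0 ≤ c) (hk : 0 < k) (hu : 0 < u) (hv : 0 < v) :
    abcTerm c k v - abcTerm c k u =
      c * (u - v) / (k * u * v) / (abcTerm c k v + abcTerm c k u) := by
  rw [abcTerm, abcTerm, sqrt_sub_sqrt (by positivity) (by positivity)]
  congr 1
  field_simp
  ring

end abcTerm

lemma abcTerm_four_six_six_ge : 0.527046 ≤ abcTerm 4 6 6 := by
  rw [abcTerm, le_sqrt' (by norm_num)]; norm_num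

lemma abcTerm_two_four_six_le : abcTerm 2 4 6 ≤ 0.5773503 := by
  rw [abcTerm, sqrt_le_left (by norm_num)]; norm_num

lemma abcTerm_one_three_six_le : abcTerm 1 3 6 ≤ 0.62361 := by
  rw [abcTerm, sqrt_le_left (by norm_num)]; norm_num

lemma four_div_le_of_six_le {u : ℝ} (hu : 6 ≤ u) :
    4 / (abcTerm 4 6 6 + abcTerm 4 6 u) ≤
      3 / (abcTerm 2 4 6 + abcTerm 2 4 u) + 2 / (abcTerm 1 3 6 + abcTerm 1 3 u) := by
  have hu0 : (0 : ℝ) < u := by linarith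
  have hBpos : 0 < abcTerm 2 4 6 + abcTerm 2 4 u :=
    add_pos (abcTerm.pos (by norm_num) (by norm_num) (by norm_num))
      (abcTerm.pos (by norm_num) (by norm_num) hu0)
  have hCpos : 0 < abcTerm 1 3 6 + abcTerm 1 3 u :=
    add_pos (abcTerm.pos (by norm_num) (by norm_num) (by norm_num))
      (abcTerm.pos (by norm_num) (by norm_num) hu0)
  have hA6 := abcTerm_four_six_six_ge
  have hB6 := abcTerm_two_four_six_le
  have hC6 := abcTerm_one_three_six_le
  have h6 : (6 : ℝ) ∈ Set.Ioi 0 := by norm_num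
  have h24 : (24 : ℝ) ∈ Set.Ioi 0 := by norm_num
  have hB6u : abcTerm 2 4 u ≤ abcTerm 2 4 6 :=
    abcTerm.antitoneOn (by norm_num) (by norm_num) h6 hu0 hu
  have hC6u : abcTerm 1 3 u ≤ abcTerm 1 3 6 :=
    abcTerm.antitoneOn (by norm_num) (by norm_num) h6 hu0 hu
  rcases le_total u 24 with hu24 | hu24
  · have hA : 0.44 ≤ abcTerm 4 6 u := by
      refine le_trans ?_ (abcTerm.antitoneOn (by norm_num) (by norm_num) hu0 h24 hu24)
      rw [abcTerm, le_sqrt' (by norm_num)]; norm_num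
    calc 4 / (abcTerm 4 6 6 + abcTerm 4 6 u) ≤ 4 / (0.527046 + 0.44) := by gcongr
      _ ≤ 3 / (0.5773503 + 0.5773503) + 2 / (0.62361 + 0.62361) := by norm_num
      _ ≤ _ := by gcongr <;> linarith
  · have hA : √(1 / 6) ≤ abcTerm 4 6 u := abcTerm.sqrt_inv_le (by norm_num) (by norm_num) hu0
    have hA' : 0.408 ≤ √(1 / 6) := by rw [le_sqrt' (by norm_num)]; norm_num
    have hB : abcTerm 2 4 u ≤ 0.5205 := by
      refine le_trans (abcTerm.antitoneOn (by norm_num) (by norm_num) h24 hu0 hu24) ?_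
      rw [abcTerm, sqrt_le_left (by norm_num)]; norm_num
    have hC : abcTerm 1 3 u ≤ 0.5893 := by
      refine le_trans (abcTerm.antitoneOn (by norm_num) (by norm_num) h24 hu0 hu24) ?_
      rw [abcTerm, sqrt_le_left (by norm_num)]; norm_num
    calc 4 / (abcTerm 4 6 6 + abcTerm 4 6 u) ≤ 4 / (0.527046 + 0.408) := by gcongr; linarith
      _ ≤ 3 / (0.5773503 + 0.5205) + 2 / (0.62361 + 0.5893) := by norm_num
      _ ≤ _ := by gcongr

lemma abcTerm_combination_le_of_six_le {u : ℝ} (hu : 6 ≤ u) :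
    -abcTerm 4 6 u + abcTerm 2 4 u + abcTerm 1 3 u ≤
      -abcTerm 4 6 6 + abcTerm 2 4 6 + abcTerm 1 3 6 := by
  have hu0 : (0 : ℝ) < u := by linarith
  have h6 : (0 : ℝ) < 6 := by norm_num
  have hfactor : (-abcTerm 4 6 6 + abcTerm 2 4 6 + abcTerm 1 3 6) -
      (-abcTerm 4 6 u + abcTerm 2 4 u + abcTerm 1 3 u) =
      (u - 6) / (36 * u) * (3 / (abcTerm 2 4 6 + abcTerm 2 4 u) +
        2 / (abcTerm 1 3 6 + abcTerm 1 3 u) - 4 / (abcTerm 4 6 6 + abcTerm 4 6 u)) := by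
    linear_combination -abcTerm.sub_eq (c := 4) (k := 6) (by norm_num) (by norm_num) hu0 h6 +
      abcTerm.sub_eq (c := 2) (k := 4) (by norm_num) (by norm_num) hu0 h6 +
      abcTerm.sub_eq (c := 1) (k := 3) (by norm_num) (by norm_num) hu0 h6
  rw [← sub_nonneg, hfactor]
  exact mul_nonneg (div_nonneg (sub_nonneg.2 hu) (by positivity))
    (sub_nonneg.2 (four_div_le_of_six_le hu))

theorem stmt19 (g : ℝ → ℝ)
    (hg : ∀ u, g u = -Real.sqrt ((u + 4) / (6 * u)) + Real.sqrt ((u + 2) / (4 * u)) -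
      Real.sqrt (1 / 2) + Real.sqrt ((u + 1) / (3 * u))) :
    Filter.Tendsto g Filter.atTop
      (nhds (-Real.sqrt (1 / 6) + Real.sqrt (1 / 4) - Real.sqrt (1 / 2) + Real.sqrt (1 / 3))) ∧
    (∀ u : ℝ, 6 ≤ u →
      g u ≤ max (g 6)
        (-Real.sqrt (1 / 6) + Real.sqrt (1 / 4) - Real.sqrt (1 / 2) + Real.sqrt (1 / 3))) ∧
    max (g 6) (-Real.sqrt (1 / 6) + Real.sqrt (1 / 4) - Real.sqrt (1 / 2) + Real.sqrt (1 / 3))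
      < -0.033 := by
  have hg' : ∀ u, g u = -abcTerm 4 6 u + abcTerm 2 4 u - √(1 / 2) + abcTerm 1 3 u := hg
  refine ⟨?_, fun u hu => le_max_of_le_left ?_, max_lt ?_ ?_⟩
  · exact (((abcTerm.tendsto_atTop 4 6).neg.add (abcTerm.tendsto_atTop 2 4)).sub_const _).add
      (abcTerm.tendsto_atTop 1 3) |>.congr fun u => (hg' u).symm
  · rw [hg', hg']
    linarith [abcTerm_combination_le_of_six_le hu]
  · have h2 : 0.7071067 ≤ √(1 / 2) := by rw [le_sqrt' (by norm_num)]; norm_num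
    rw [hg']
    linarith [abcTerm_four_six_six_ge, abcTerm_two_four_six_le, abcTerm_one_three_six_le]
  · have h6 : 0.408 ≤ √(1 / 6) := by rw [le_sqrt' (by norm_num)]; norm_num
    have h4 : √(1 / 4) ≤ 0.5 := by rw [sqrt_le_left (by norm_num)]; norm_num
    have h3 : √(1 / 3) ≤ 0.578 := by rw [sqrt_le_left (by norm_num)]; norm_num
    have h2 : 0.707 ≤ √(1 / 2) := by rw [le_sqrt' (by norm_num)]; norm_num
    linarith
end
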